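/- arXiv:1210.3184 — 2 statements merged into one kernel-verified Lean document; each statement's English description precedes it below -/
import Mathlib

section
/- Suppose v : [0,T]×ℝⁿ → ℝ is C¹ with Lv(t,x) := ∂v/∂t + ∇ₓv·f(t,x) ≤ 0 for all (t,x) ∈ [0,T]×X̄, and v ≥ 0 on ([0,T]×X_∂) ∪ ({T}×X_T^c), and w : ℝⁿ → ℝ satisfies w(x) ≥ v(0,x)+1 on X. Then w(x₀) ≥ 1 for every x₀ in the complement ROA X₀^c. -/
open Set

theorem antitoneOn_comp_of_fderiv_nonpos {E : Type*} [NormedAddCommGroup E] [NormedSpace ℝ E]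
    {v : ℝ × E → ℝ} (hv : Differentiable ℝ v) {x x' : ℝ → E} {a b : ℝ}
    (hx : ∀ t ∈ Icc a b, HasDerivAt x (x' t) t)
    (hLv : ∀ t ∈ Ioo a b, fderiv ℝ v (t, x t) (1, x' t) ≤ 0) :
    AntitoneOn (fun t => v (t, x t)) (Icc a b) := by
  have hderiv : ∀ t ∈ Icc a b,
      HasDerivAt (fun s => v (s, x s)) (fderiv ℝ v (t, x t) (1, x' t)) t := fun t ht =>
    (hv (t, x t)).hasFDerivAt.comp_hasDerivAt t ((hasDerivAt_id t).prodMk (hx t ht))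
  apply antitoneOn_of_deriv_nonpos (convex_Icc a b)
  · exact fun t ht => (hderiv t ht).continuousAt.continuousWithinAt
  · rw [interior_Icc]
    exact fun t ht => (hderiv t (Ioo_subset_Icc_self ht)).differentiableAt.differentiableWithinAt
  · rw [interior_Icc]
    intro t ht
    rw [(hderiv t (Ioo_subset_Icc_self ht)).deriv]
    exact hLv t ht

theorem stmt6_general (n : ℕ) (T : ℝ)
    (f : ℝ → (Fin n → ℝ) → (Fin n → ℝ))
    (gX gT : (Fin n → ℝ) → ℝ)
    (v : ℝ × (Fin n → ℝ) → ℝ) (hv : ContDiff ℝ 1 v)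
    (w : (Fin n → ℝ) → ℝ)
    (hLv : ∀ t ∈ Set.Icc 0 T, ∀ x, gX x ≥ 0 → fderiv ℝ v (t, x) (1, f t x) ≤ 0)
    (hv_bdry : ∀ t ∈ Set.Icc 0 T, ∀ x, gX x = 0 → v (t, x) ≥ 0)
    (hv_term : ∀ x, gX x ≥ 0 → gT x ≤ 0 → v (T, x) ≥ 0)
    (hw : ∀ x, gX x > 0 → w x ≥ v (0, x) + 1) :
    ∀ (x₀ : Fin n → ℝ) (x : ℝ → (Fin n → ℝ)) (τ : ℝ),
      gX x₀ > 0 → τ ∈ Set.Icc 0 T → x 0 = x₀ →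
      (∀ t ∈ Set.Icc 0 τ, HasDerivAt x (f t (x t)) t) →
      (∀ t ∈ Set.Icc 0 τ, gX (x t) ≥ 0) →
      (gX (x τ) = 0 ∨ (τ = T ∧ gX (x T) ≥ 0 ∧ gT (x T) ≤ 0)) →
      w x₀ ≥ 1 := by
  rintro x₀ x τ hx₀ hτ rfl hx hstay hend
  have hdecrease : v (τ, x τ) ≤ v (0, x 0) := by
    refine antitoneOn_comp_of_fderiv_nonpos (hv.differentiable one_ne_zero) hx
      (fun t ht => hLv t ⟨ht.1.le, ht.2.le.trans hτ.2⟩ _ (hstay t (Ioo_subset_Icc_self ht)))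
      (left_mem_Icc.2 hτ.1) (right_mem_Icc.2 hτ.1) hτ.1
  have hterminal : 0 ≤ v (τ, x τ) := by
    rcases hend with hbdry | ⟨rfl, hinside, htarget⟩
    · exact hv_bdry τ hτ _ hbdry
    · exact hv_term _ hinside htarget
  linarith [hw _ hx₀]

/-- Lemma 1: Suppose v is C¹ with Lv = ∂v/∂t + ∇ₓv·f ≤ 0 on [0,T]×X̄,
v ≥ 0 on ([0,T]×X_∂) ∪ ({T}×X_T^c), and w ≥ v(0,·)+1 on X = {g_X > 0}, where
X̄ = {g_X ≥ 0}, X_∂ = {g_X = 0}, X_T^c = {g_X ≥ 0 ∧ g_T ≤ 0}. Then w(x₀) ≥ 1 for every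
x₀ in the complement ROA X₀^c, i.e. for every x₀ ∈ X whose trajectory stays in X̄ up to
a time τ ∈ [0,T] at which it either hits X_∂ or (τ = T and) ends in X_T^c. -/
theorem stmt6 (n : ℕ) (T : ℝ) (hT : 0 ≤ T)
    (f : ℝ → (Fin n → ℝ) → (Fin n → ℝ))
    (gX gT : (Fin n → ℝ) → ℝ)
    (v : ℝ × (Fin n → ℝ) → ℝ) (hv : ContDiff ℝ 1 v)
    (w : (Fin n → ℝ) → ℝ)
    (hLv : ∀ t ∈ Set.Icc 0 T, ∀ x, gX x ≥ 0 → fderiv ℝ v (t, x) (1, f t x) ≤ 0)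
    (hv_bdry : ∀ t ∈ Set.Icc 0 T, ∀ x, gX x = 0 → v (t, x) ≥ 0)
    (hv_term : ∀ x, gX x ≥ 0 → gT x ≤ 0 → v (T, x) ≥ 0)
    (hw : ∀ x, gX x > 0 → w x ≥ v (0, x) + 1) :
    ∀ (x₀ : Fin n → ℝ) (x : ℝ → (Fin n → ℝ)) (τ : ℝ),
      gX x₀ > 0 → τ ∈ Set.Icc 0 T → x 0 = x₀ →
      (∀ t ∈ Set.Icc 0 τ, HasDerivAt x (f t (x t)) t) →
      (∀ t ∈ Set.Icc 0 τ, gX (x t) ≥ 0) →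
      (gX (x τ) = 0 ∨ (τ = T ∧ gX (x T) ≥ 0 ∧ gT (x T) ≤ 0)) →
      w x₀ ≥ 1 :=
  stmt6_general n T f gX gT v hv w hLv hv_bdry hv_term hw
end

section
/- Under the hypotheses of the previous lemma (Lv ≤ 0 on [0,T]×X̄, v ≥ 0 on ([0,T]×X_∂)∪({T}×X_T^c), w ≥ v(0,·)+1 on X, and additionally w ≥ 0 on X̄), the sublevel set {x ∈ X : w(x) < 1} is contained in the ROA X₀. -/
/-!
Along a trajectory `γ` the function `t ↦ v (t, γ t)` has derivative `L v ≤ 0` as long as `γ`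
stays in `X̄`, so it never exceeds its initial value `v (0, x₀) ≤ w x₀ - 1 < 0`. At the first
time `γ` reaches `∂X` this contradicts `v ≥ 0` there, so `γ` stays in `X` on `[0, T]`; at time
`T` the same bound contradicts `v ≥ 0` on `{T} × X_Tᶜ`, so `γ T ∈ X_T`.
-/

open Set

theorem ContinuousOn.exists_first_zero {g : ℝ → ℝ} {a b t₁ : ℝ} (hg : ContinuousOn g (Icc a b))
    (ha : 0 < g a) (ht₁ : t₁ ∈ Icc a b) (hgt₁ : g t₁ ≤ 0) :
    ∃ τ ∈ Icc a b, g τ = 0 ∧ ∀ s ∈ Ico a τ, 0 < g s := by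
  set S := Icc a b ∩ {t | g t ≤ 0}
  have hSbdd : BddBelow S := ⟨a, fun s hs => hs.1.1⟩
  have hτS : sInf S ∈ S :=
    (hg.preimage_isClosed_of_isClosed isClosed_Icc isClosed_Iic).csInf_mem ⟨t₁, ht₁, hgt₁⟩ hSbdd
  have hpos : ∀ s ∈ Ico a (sInf S), 0 < g s := fun s hs => not_le.1 fun hgs =>
    (csInf_le hSbdd ⟨⟨hs.1, hs.2.le.trans hτS.1.2⟩, hgs⟩).not_gt hs.2
  refine ⟨sInf S, hτS.1, ?_, hpos⟩
  obtain ⟨c, hc, hgc⟩ : (0 : ℝ) ∈ g '' Icc a (sInf S) :=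
    intermediate_value_Icc' hτS.1.1 (hg.mono (Icc_subset_Icc_right hτS.1.2)) ⟨hτS.2, ha.le⟩
  obtain rfl | hlt := hc.2.eq_or_lt
  · exact hgc
  · exact absurd hgc (hpos c ⟨hc.1, hlt⟩).ne'

theorem DifferentiableAt.hasDerivAt_comp_prodMk {E F : Type*} [NormedAddCommGroup E]
    [NormedSpace ℝ E] [NormedAddCommGroup F] [NormedSpace ℝ F] {v : ℝ × E → F} {γ : ℝ → E}
    {γ' : E} {t : ℝ} (hv : DifferentiableAt ℝ v (t, γ t)) (hγ : HasDerivAt γ γ' t) :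
    HasDerivAt (fun s => v (s, γ s)) (fderiv ℝ v (t, γ t) (1, γ')) t :=
  hv.hasFDerivAt.comp_hasDerivAt t ((hasDerivAt_id t).prodMk hγ)

section Trajectory

variable {E : Type*} [NormedAddCommGroup E] [NormedSpace ℝ E] {f : ℝ → E → E} {γ : ℝ → E}
  {v : ℝ × E → ℝ} {T : ℝ} {K : Set E}

theorem value_le_initial_of_lieDeriv_nonpos (hγ : ∀ t ∈ Icc 0 T, HasDerivAt γ (f t (γ t)) t)
    (hv : Differentiable ℝ v) (hLv : ∀ t ∈ Icc 0 T, ∀ x ∈ K, fderiv ℝ v (t, x) (1, f t x) ≤ 0)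
    {τ : ℝ} (hτ : τ ∈ Icc 0 T) (hK : ∀ s ∈ Ioo 0 τ, γ s ∈ K) :
    v (τ, γ τ) ≤ v (0, γ 0) := by
  have hsub : Icc 0 τ ⊆ Icc 0 T := Icc_subset_Icc_right hτ.2
  have hderiv : ∀ t ∈ Icc 0 τ,
      HasDerivAt (fun s => v (s, γ s)) (fderiv ℝ v (t, γ t) (1, f t (γ t))) t :=
    fun t ht => (hv _).hasDerivAt_comp_prodMk (hγ t (hsub ht))
  have hanti : AntitoneOn (fun s => v (s, γ s)) (Icc 0 τ) := by
    refine antitoneOn_of_hasDerivWithinAt_nonpos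
      (f' := fun t => fderiv ℝ v (t, γ t) (1, f t (γ t))) (convex_Icc 0 τ)
      (fun t ht => (hderiv t ht).continuousAt.continuousWithinAt) (fun t ht => ?_) (fun t ht => ?_)
    all_goals rw [interior_Icc] at ht
    · exact (hderiv t (Ioo_subset_Icc_self ht)).hasDerivWithinAt
    · exact hLv t (hsub (Ioo_subset_Icc_self ht)) _ (hK t ht)
  exact hanti (left_mem_Icc.2 hτ.1) (right_mem_Icc.2 hτ.1) hτ.1

theorem pos_along_of_lieDeriv_nonpos {g : E → ℝ} (hg : Continuous g)
    (hγ : ∀ t ∈ Icc 0 T, HasDerivAt γ (f t (γ t)) t) (hv : Differentiable ℝ v)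
    (hLv : ∀ t ∈ Icc 0 T, ∀ x, 0 ≤ g x → fderiv ℝ v (t, x) (1, f t x) ≤ 0)
    (hv_bdry : ∀ t ∈ Icc 0 T, ∀ x, g x = 0 → 0 ≤ v (t, x))
    (hg0 : 0 < g (γ 0)) (hv0 : v (0, γ 0) < 0) :
    ∀ t ∈ Icc 0 T, 0 < g (γ t) := by
  by_contra! ⟨t₁, ht₁, hgt₁⟩
  have hgγ : ContinuousOn (g ∘ γ) (Icc 0 T) :=
    hg.comp_continuousOn fun t ht => (hγ t ht).continuousAt.continuousWithinAt
  obtain ⟨τ, hτ, hgτ, hpos⟩ := hgγ.exists_first_zero hg0 ht₁ hgt₁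
  have hle := value_le_initial_of_lieDeriv_nonpos (K := {x | 0 ≤ g x}) hγ hv hLv hτ
    fun s hs => (hpos s (Ioo_subset_Ico_self hs)).le
  linarith [hv_bdry τ hτ (γ τ) hgτ]

end Trajectory

theorem stmt7_general (n : ℕ) (T : ℝ) (hT : 0 ≤ T)
    (f : ℝ → (Fin n → ℝ) → (Fin n → ℝ))
    (gX gT : (Fin n → ℝ) → ℝ) (hgX : Continuous gX)
    (φ : (Fin n → ℝ) → ℝ → (Fin n → ℝ))
    (hφ0 : ∀ x₀, φ x₀ 0 = x₀)
    (hφode : ∀ x₀, ∀ t ∈ Set.Icc 0 T, HasDerivAt (φ x₀) (f t (φ x₀ t)) t)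
    (v : ℝ × (Fin n → ℝ) → ℝ) (hv : ContDiff ℝ 1 v)
    (w : (Fin n → ℝ) → ℝ)
    (hLv : ∀ t ∈ Set.Icc 0 T, ∀ x, gX x ≥ 0 → fderiv ℝ v (t, x) (1, f t x) ≤ 0)
    (hv_bdry : ∀ t ∈ Set.Icc 0 T, ∀ x, gX x = 0 → v (t, x) ≥ 0)
    (hv_term : ∀ x, gX x ≥ 0 → gT x ≤ 0 → v (T, x) ≥ 0)
    (hw : ∀ x, gX x > 0 → w x ≥ v (0, x) + 1) :
    {x : Fin n → ℝ | gX x > 0 ∧ w x < 1} ⊆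
      {x₀ : Fin n → ℝ | gX x₀ > 0 ∧ (∀ t ∈ Set.Icc 0 T, gX (φ x₀ t) > 0) ∧
        gT (φ x₀ T) > 0} := by
  rintro x₀ ⟨hgx₀, hwx₀⟩
  have hvdiff : Differentiable ℝ v := hv.differentiable one_ne_zero
  have hv0 : v (0, φ x₀ 0) < 0 := by
    rw [hφ0]
    linarith [hw x₀ hgx₀]
  have hstay : ∀ t ∈ Icc 0 T, 0 < gX (φ x₀ t) :=
    pos_along_of_lieDeriv_nonpos hgX (hφode x₀) hvdiff hLv hv_bdry (by rwa [hφ0]) hv0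
  refine ⟨hgx₀, hstay, not_le.1 fun hgT => ?_⟩
  have hT_mem : T ∈ Icc 0 T := right_mem_Icc.2 hT
  have hle := value_le_initial_of_lieDeriv_nonpos (K := {x | 0 ≤ gX x}) (hφode x₀) hvdiff hLv
    hT_mem fun s hs => (hstay s (Ioo_subset_Icc_self hs)).le
  linarith [hv_term _ (hstay T hT_mem).le hgT]

/-- Under the hypotheses of Lemma 1 (Lv ≤ 0 on [0,T]×X̄, v ≥ 0 on
([0,T]×X_∂)∪({T}×X_T^c), w ≥ v(0,·)+1 on X, and additionally w ≥ 0 on X̄), the sublevel set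
{x ∈ X : w(x) < 1} is contained in the ROA X₀, the set of x₀ ∈ X whose trajectory φ(x₀,·)
stays in X on [0,T] and ends in X_T = {g_T > 0} at time T. -/
theorem stmt7 (n : ℕ) (T : ℝ) (hT : 0 ≤ T)
    (f : ℝ → (Fin n → ℝ) → (Fin n → ℝ))
    (gX gT : (Fin n → ℝ) → ℝ) (hgX : Continuous gX) (hgT : Continuous gT)
    (hXT_sub : ∀ x : Fin n → ℝ, gT x > 0 → gX x > 0)
    (φ : (Fin n → ℝ) → ℝ → (Fin n → ℝ))
    (hφ0 : ∀ x₀, φ x₀ 0 = x₀)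
    (hφode : ∀ x₀, ∀ t ∈ Set.Icc 0 T, HasDerivAt (φ x₀) (f t (φ x₀ t)) t)
    (v : ℝ × (Fin n → ℝ) → ℝ) (hv : ContDiff ℝ 1 v)
    (w : (Fin n → ℝ) → ℝ)
    (hLv : ∀ t ∈ Set.Icc 0 T, ∀ x, gX x ≥ 0 → fderiv ℝ v (t, x) (1, f t x) ≤ 0)
    (hv_bdry : ∀ t ∈ Set.Icc 0 T, ∀ x, gX x = 0 → v (t, x) ≥ 0)
    (hv_term : ∀ x, gX x ≥ 0 → gT x ≤ 0 → v (T, x) ≥ 0)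
    (hw : ∀ x, gX x > 0 → w x ≥ v (0, x) + 1)
    (hw_nonneg : ∀ x, gX x ≥ 0 → w x ≥ 0) :
    {x : Fin n → ℝ | gX x > 0 ∧ w x < 1} ⊆
      {x₀ : Fin n → ℝ | gX x₀ > 0 ∧ (∀ t ∈ Set.Icc 0 T, gX (φ x₀ t) > 0) ∧
        gT (φ x₀ T) > 0} :=
  stmt7_general n T hT f gX gT hgX φ hφ0 hφode v hv w hLv hv_bdry hv_term hw
end
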